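/- arXiv:1210.8245 — 3 statements merged into one kernel-verified Lean document; each statement's English description precedes it below -/
import Mathlib

section
/- There is no sequence (pₖ)_{k≥0} of nonnegative reals with Σ pₖ < ∞, not all zero beyond constant, such that the function C̃(δ) = p₀ + Σ_{k≥1} pₖ cos(2kπδ) satisfies C̃(t−s) − C̃(s)C̃(t)/C̃(0) = min(s,t)(1 − max(s,t)) for all s,t ∈ [0,1]. That is, the Brownian bridge is not the zero-conditioning of any 1-periodic stationary Gaussian process. -/
/-!
An even 1-periodic covariogram satisfies `C̃(1 - δ) = C̃(δ)`. Evaluating the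
conditioned covariance at `(¼,¼)` and `(¼,¾)`, where `C̃(¾) = C̃(¼)`, gives `C̃(0) - C̃(½) = 1/8`;
at `(½,½)` it gives `C̃(0)² - C̃(½)² = C̃(0)/4`. Together these force `C̃(0)/4 - 1/64 = C̃(0)/4`.
-/

open Real Set

noncomputable def cosineSeries (p : ℕ → ℝ) (δ : ℝ) : ℝ :=
  p 0 + ∑' k : ℕ, p (k + 1) * cos (2 * (k + 1) * π * δ)

theorem cosineSeries_one_sub (p : ℕ → ℝ) (δ : ℝ) :
    cosineSeries p (1 - δ) = cosineSeries p δ := by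
  unfold cosineSeries
  congr 1
  refine tsum_congr fun k => ?_
  have hangle : 2 * (k + 1) * π * (1 - δ) = (k + 1 : ℕ) * (2 * π) - 2 * (k + 1) * π * δ := by
    push_cast; ring
  rw [hangle, cos_nat_mul_two_pi_sub]

noncomputable def zeroConditionedCov (C : ℝ → ℝ) (s t : ℝ) : ℝ :=
  C (t - s) - C s * C t / C 0

noncomputable def brownianBridgeCov (s t : ℝ) : ℝ :=
  min s t * (1 - max s t)

theorem not_forall_zeroConditionedCov_eq_brownianBridgeCov {C : ℝ → ℝ} (hC0 : C 0 ≠ 0)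
    (hsymm : ∀ δ, C (1 - δ) = C δ) :
    ¬ ∀ s ∈ Icc (0 : ℝ) 1, ∀ t ∈ Icc (0 : ℝ) 1,
      zeroConditionedCov C s t = brownianBridgeCov s t := by
  intro h
  have hquarter := h (1/4) (by norm_num) (1/4) (by norm_num)
  have hcross := h (1/4) (by norm_num) (3/4) (by norm_num)
  have hhalf := h (1/2) (by norm_num) (1/2) (by norm_num)
  have h34 : C (3/4) = C (1/4) := by norm_num [← hsymm (1/4)]
  simp only [zeroConditionedCov, brownianBridgeCov, h34] at hquarter hcross hhalf
  norm_num at hquarter hcross hhalf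
  field_simp at hquarter hcross hhalf
  have hdiff : C 0 - C (1/2) = 1/8 := by
    have hprod : C 0 * ((C 0 - C (1/2)) * 8 - 1) = 0 := by
      linear_combination hquarter / 2 - hcross / 2
    linarith [(mul_eq_zero.1 hprod).resolve_left hC0]
  nlinarith [hdiff, hhalf]

/-- The Brownian bridge is not the zero-conditioning of a 1-periodic stationary
Gaussian process: no nonnegative summable sequence `(pₖ)` with
`C̃(δ) = p₀ + Σ_{k≥1} pₖ cos(2kπδ)`, `C̃(0) > 0`, satisfies
`C̃(t-s) - C̃(s)C̃(t)/C̃(0) = min(s,t)(1-max(s,t))` on `[0,1]²`. -/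
theorem brownian_bridge_not_in_H0 :
    ¬ ∃ p : ℕ → ℝ, (∀ k, 0 ≤ p k) ∧ Summable p ∧
      (fun δ : ℝ => p 0 + ∑' k : ℕ, p (k + 1) * Real.cos (2 * (k + 1) * Real.pi * δ)) 0 > 0 ∧
      ∀ s ∈ Set.Icc (0:ℝ) 1, ∀ t ∈ Set.Icc (0:ℝ) 1,
        (fun δ : ℝ => p 0 + ∑' k : ℕ, p (k + 1) * Real.cos (2 * (k + 1) * Real.pi * δ)) (t - s)
          - (fun δ : ℝ => p 0 + ∑' k : ℕ, p (k + 1) * Real.cos (2 * (k + 1) * Real.pi * δ)) s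
            * (fun δ : ℝ => p 0 + ∑' k : ℕ, p (k + 1) * Real.cos (2 * (k + 1) * Real.pi * δ)) t
            / (fun δ : ℝ => p 0 + ∑' k : ℕ, p (k + 1) * Real.cos (2 * (k + 1) * Real.pi * δ)) 0
          = min s t * (1 - max s t) := by
  rintro ⟨p, -, -, hC0, hR⟩
  exact not_forall_zeroConditionedCov_eq_brownianBridgeCov (C := cosineSeries p) hC0.ne'
    (cosineSeries_one_sub p) hR
end

section
/- Let (pₖ)_{k≥0} be nonnegative with Σₖ pₖ = 1 and set C̃(δ) = p₀ + Σ_{k≥1} pₖ cos(kπδ) for δ ∈ [0,2]. If R(s,t) := C̃(t−s) − C̃(s)C̃(t)/C̃(0) satisfies R(s,1) = 0 for all s ∈ [0,2], then for every m ≥ 0 either p_{2m} = 0 or Σ_{k≥0} p_{2k+1} = 0; hence either all even-index or all odd-index coefficients vanish. -/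
open Real

/-! At `s = 1`, since `C̃(0) = Σ pₖ = 1`, the hypothesis reads `C̃(1)² = 1`, where
`C̃(1) = Σ (-1)ᵏ pₖ`. So `Σ (1 ∓ (-1)ᵏ) pₖ = 0`, a sum of nonnegative terms,
and every odd (resp. even) coefficient vanishes. -/

lemma hasSum_mul_cos_nat_mul_pi_mul {p : ℕ → ℝ} (hp : ∀ k, 0 ≤ p k) (hs : Summable p) (δ : ℝ) :
    HasSum (fun k : ℕ => p k * cos (k * π * δ))
      (p 0 + ∑' k : ℕ, p (k + 1) * cos ((k + 1) * π * δ)) := by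
  have hsumm : Summable (fun k : ℕ => p k * cos (k * π * δ)) :=
    hs.of_norm_bounded fun k => by
      rw [norm_mul, Real.norm_of_nonneg (hp k)]
      exact mul_le_of_le_one_right (hp k) (abs_cos_le_one _)
  convert hsumm.hasSum using 1
  rw [hsumm.tsum_eq_zero_add]
  push_cast
  simp

lemma apply_odd_eq_zero_of_hasSum_neg_one_pow_mul {p : ℕ → ℝ} {a : ℝ} (hp : ∀ k, 0 ≤ p k)
    (hs : HasSum p a) (halt : HasSum (fun k => (-1) ^ k * p k) a) (k : ℕ) : p (2 * k + 1) = 0 := by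
  have hzero : HasSum (fun k => (1 - (-1) ^ k) * p k) 0 := by
    simpa [sub_mul] using hs.sub halt
  have hnonneg : ∀ k, 0 ≤ (1 - (-1 : ℝ) ^ k) * p k := fun k =>
    mul_nonneg (by rcases neg_one_pow_eq_or ℝ k with h | h <;> rw [h] <;> norm_num) (hp k)
  have := congrFun ((hasSum_zero_iff_of_nonneg hnonneg).mp hzero) (2 * k + 1)
  simpa [pow_succ] using this

lemma apply_even_eq_zero_of_hasSum_neg_one_pow_mul {p : ℕ → ℝ} {a : ℝ} (hp : ∀ k, 0 ≤ p k)
    (hs : HasSum p a) (halt : HasSum (fun k => (-1) ^ k * p k) (-a)) (m : ℕ) : p (2 * m) = 0 := by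
  have hzero : HasSum (fun k => (1 + (-1) ^ k) * p k) 0 := by
    simpa [add_mul] using hs.add halt
  have hnonneg : ∀ k, 0 ≤ (1 + (-1 : ℝ) ^ k) * p k := fun k =>
    mul_nonneg (by rcases neg_one_pow_eq_or ℝ k with h | h <;> rw [h] <;> norm_num) (hp k)
  have := congrFun ((hasSum_zero_iff_of_nonneg hnonneg).mp hzero) (2 * m)
  simpa [pow_mul] using this

/-- If a 2-periodic covariogram `C̃(δ) = p₀ + Σ_{k≥1} pₖ cos(kπδ)` with `pₖ ≥ 0`,
`Σ pₖ = 1`, yields a conditioned covariance with `R(s,1) = 0` for all `s ∈ [0,2]`,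
then either all even-index or all odd-index coefficients vanish. -/
theorem extension_is_periodic_or_antiperiodic
    (p : ℕ → ℝ) (hp : ∀ k, 0 ≤ p k) (hsum : HasSum p 1)
    (C : ℝ → ℝ)
    (hC : ∀ δ : ℝ, C δ = p 0 + ∑' k : ℕ, p (k + 1) * Real.cos ((k + 1) * Real.pi * δ))
    (hR : ∀ s ∈ Set.Icc (0:ℝ) 2, C (1 - s) - C s * C 1 / C 0 = 0) :
    (∀ m : ℕ, p (2 * m) = 0) ∨ (∀ k : ℕ, p (2 * k + 1) = 0) := by
  have hC_hasSum (δ : ℝ) : HasSum (fun k : ℕ => p k * cos (k * π * δ)) (C δ) :=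
    hC δ ▸ hasSum_mul_cos_nat_mul_pi_mul hp hsum.summable δ
  have hC0 : C 0 = 1 := (by simpa using hC_hasSum 0 : HasSum p (C 0)).unique hsum
  have hC1 : HasSum (fun k => (-1) ^ k * p k) (C 1) := by
    convert hC_hasSum 1 using 2 with k
    rw [mul_one, cos_nat_mul_pi, mul_comm]
  have hC1_sq : C 1 * C 1 = 1 := by
    have := hR 1 ⟨by norm_num, by norm_num⟩
    rw [sub_self, hC0, div_one] at this
    linarith
  rcases mul_self_eq_one_iff.mp hC1_sq with h | h
  · exact Or.inr (apply_odd_eq_zero_of_hasSum_neg_one_pow_mul hp hsum (by rwa [h] at hC1))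
  · exact Or.inl (apply_even_eq_zero_of_hasSum_neg_one_pow_mul hp hsum (by rwa [h] at hC1))
end

section
/- The eigenvalues of the conditioned covariance operator interlace strictly with those of the generator: with (a_{(n)})ₙ the strictly decreasing enumeration of the distinct positive values of (aₙ), no eigenvalue ã of the operator with kernel R(s,t) = C̃(t−s) − C̃(s)C̃(t)/C̃(0) exceeds a_{(1)} = max aₙ, where C̃(δ) = a₀ + 2Σ aₙ cos(2nπδ), aₙ ≥ 0, a₀ + 2Σ aₙ = 1. -/
/-!
Write `C(δ) = ∑_{n ∈ ℤ} a_{|n|} cos(2πnδ)` and let `c_n, s_n` be the cosine and sine coefficients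
of `f` on `[0, 1]`. Pairing the eigenvalue equation with `f` gives the Rayleigh identity
`ã ∫ f² = ∫∫ C(t - s) f(t) f(s) - (∫ C f)²`, and expanding the kernel termwise gives
`∫∫ C(t - s) f(t) f(s) = ∑ₙ a_{|n|} (c_n² + s_n²) ≤ (sup a) ∑ₙ (c_n² + s_n²)`,
which is `(sup a) ∫ f²` by Parseval. Since `∫ f² > 0`, this forces `ã ≤ sup a`.
-/

open Real MeasureTheory intervalIntegral Set

noncomputable def cosCoeff (f : ℝ → ℝ) (ω : ℝ) : ℝ := ∫ t in (0:ℝ)..1, cos (2 * π * ω * t) * f t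

noncomputable def sinCoeff (f : ℝ → ℝ) (ω : ℝ) : ℝ := ∫ t in (0:ℝ)..1, sin (2 * π * ω * t) * f t

theorem abs_mul_cos_le (b x : ℝ) : |b * cos x| ≤ |b| := by
  rw [abs_mul]
  exact mul_le_of_le_one_right (abs_nonneg _) (abs_cos_le_one x)

theorem abs_cos_mul_add_sin_mul_le (x c d : ℝ) : |cos x * c + sin x * d| ≤ |c| + |d| := by
  refine (abs_add_le _ _).trans (add_le_add ?_ ?_) <;> rw [abs_mul]
  · exact mul_le_of_le_one_left (abs_nonneg _) (abs_cos_le_one x)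
  · exact mul_le_of_le_one_left (abs_nonneg _) (abs_sin_le_one x)

theorem ContinuousOn.memLp_restrict_Ioc {E : Type*} [NormedAddCommGroup E] {f : ℝ → E}
    {a b : ℝ} {p : ENNReal} (hf : ContinuousOn f (Icc a b)) :
    MemLp f p (volume.restrict (Ioc a b)) := by
  obtain ⟨M, hM⟩ := isCompact_Icc.exists_bound_of_continuousOn hf
  refine MemLp.of_bound ((hf.mono Ioc_subset_Icc_self).aestronglyMeasurable measurableSet_Ioc) M ?_
  exact (ae_restrict_iff' measurableSet_Ioc).mpr
    (ae_of_all _ fun t ht => hM t (Ioc_subset_Icc_self ht))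

theorem hasSum_int_natAbs_mul_cos {a : ℕ → ℝ} (ha : Summable a) (δ : ℝ) :
    HasSum (fun n : ℤ => a n.natAbs * cos (2 * π * n * δ))
      (a 0 + 2 * ∑' n : ℕ, a (n + 1) * cos (2 * (n + 1) * π * δ)) := by
  set F : ℤ → ℝ := fun n => a n.natAbs * cos (2 * π * n * δ)
  have hpos : HasSum (fun n : ℕ => F (n + 1))
      (∑' n : ℕ, a (n + 1) * cos (2 * (n + 1) * π * δ)) := by
    have hF (n : ℕ) : F (n + 1) = a (n + 1) * cos (2 * (n + 1) * π * δ) := by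
      have hn : ((n : ℤ) + 1).natAbs = n + 1 := by omega
      simp only [F, hn]
      push_cast
      ring_nf
    simp only [hF]
    exact (((summable_nat_add_iff 1).mpr ha).abs.of_norm_bounded
      fun n => abs_mul_cos_le _ _).hasSum
  have hneg : HasSum (fun n : ℕ => F (-(n + 1)))
      (∑' n : ℕ, a (n + 1) * cos (2 * (n + 1) * π * δ)) := by
    have hFeven (m : ℤ) : F (-m) = F m := by
      simp only [F, Int.natAbs_neg, Int.cast_neg, mul_neg, neg_mul, cos_neg]
    simpa only [hFeven] using hpos
  convert hpos.of_add_one_of_neg_add_one hneg using 1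
  simp only [Int.natAbs_zero, Int.cast_zero, mul_zero, zero_mul, cos_zero, mul_one, F]
  ring

theorem continuous_of_hasSum_cos {ι : Type*} {b ω : ι → ℝ} {K : ℝ → ℝ} (hb : Summable b)
    (hK : ∀ δ, HasSum (fun i => b i * cos (2 * π * ω i * δ)) (K δ)) : Continuous K := by
  have hK' : K = fun δ => ∑' i, b i * cos (2 * π * ω i * δ) :=
    funext fun δ => (hK δ).tsum_eq.symm
  rw [hK']
  exact continuous_tsum (fun i => by fun_prop) hb.abs fun i δ => abs_mul_cos_le _ _

section
variable {f : ℝ → ℝ}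

theorem integral_cos_add_sin_mul (hf : IntervalIntegrable f volume 0 1) (ω c d : ℝ) :
    ∫ t in (0:ℝ)..1, (cos (2 * π * ω * t) * c + sin (2 * π * ω * t) * d) * f t
      = c * cosCoeff f ω + d * sinCoeff f ω := by
  have hcos : IntervalIntegrable (fun t => cos (2 * π * ω * t) * f t) volume 0 1 :=
    hf.continuousOn_mul (by fun_prop)
  have hsin : IntervalIntegrable (fun t => sin (2 * π * ω * t) * f t) volume 0 1 :=
    hf.continuousOn_mul (by fun_prop)
  rw [cosCoeff, sinCoeff, ← intervalIntegral.integral_const_mul,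
    ← intervalIntegral.integral_const_mul, ← integral_add (hcos.const_mul c) (hsin.const_mul d)]
  congr 1 with t
  ring

theorem integral_cos_sub_mul (hf : IntervalIntegrable f volume 0 1) (ω s : ℝ) :
    ∫ t in (0:ℝ)..1, cos (2 * π * ω * (t - s)) * f t
      = cos (2 * π * ω * s) * cosCoeff f ω + sin (2 * π * ω * s) * sinCoeff f ω := by
  rw [← integral_cos_add_sin_mul hf]
  congr 1 with t
  rw [mul_sub, cos_sub]

theorem abs_integral_mul_le_integral_abs {g : ℝ → ℝ} (hg : ∀ t, |g t| ≤ 1)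
    (hf : IntervalIntegrable f volume 0 1) :
    |∫ t in (0:ℝ)..1, g t * f t| ≤ ∫ t in (0:ℝ)..1, |f t| := by
  rw [← Real.norm_eq_abs]
  refine norm_integral_le_of_norm_le zero_le_one (ae_of_all _ fun t _ => ?_) hf.abs
  rw [norm_mul, Real.norm_eq_abs, Real.norm_eq_abs]
  exact mul_le_of_le_one_left (abs_nonneg _) (hg t)

theorem fourierCoeffOn_ofReal (hf : IntervalIntegrable f volume 0 1) (n : ℤ) :
    fourierCoeffOn zero_lt_one (fun t => (f t : ℂ)) n
      = cosCoeff f n - sinCoeff f n * Complex.I := by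
  have hcos : IntervalIntegrable (fun t => cos (2 * π * n * t) * f t) volume 0 1 :=
    hf.continuousOn_mul (by fun_prop)
  have hsin : IntervalIntegrable (fun t => sin (2 * π * n * t) * f t) volume 0 1 :=
    hf.continuousOn_mul (by fun_prop)
  have hcosC : IntervalIntegrable (fun t => ((cos (2 * π * n * t) * f t : ℝ) : ℂ)) volume 0 1 :=
    ⟨hcos.1.ofReal, hcos.2.ofReal⟩
  have hsinC : IntervalIntegrable (fun t => ((sin (2 * π * n * t) * f t : ℝ) : ℂ)) volume 0 1 :=
    ⟨hsin.1.ofReal, hsin.2.ofReal⟩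
  rw [fourierCoeffOn_eq_integral, cosCoeff, sinCoeff, ← integral_ofReal, ← integral_ofReal,
    ← intervalIntegral.integral_mul_const, ← integral_sub hcosC (hsinC.mul_const _)]
  simp only [sub_zero, div_one, one_smul]
  congr 1 with t
  rw [fourier_coe_apply, smul_eq_mul]
  have harg : 2 * π * Complex.I * ↑(-n) * t / ↑(1 - 0 : ℝ) = ↑(-(2 * π * n * t)) * Complex.I := by
    push_cast
    ring
  rw [harg, Complex.exp_mul_I, ← Complex.ofReal_cos, ← Complex.ofReal_sin, cos_neg, sin_neg]
  push_cast
  ring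

theorem hasSum_sq_cosCoeff_add_sq_sinCoeff (hf : MemLp f 2 (volume.restrict (Ioc 0 1))) :
    HasSum (fun n : ℤ => cosCoeff f n ^ 2 + sinCoeff f n ^ 2) (∫ t in (0:ℝ)..1, f t ^ 2) := by
  have hfi : IntervalIntegrable f volume 0 1 :=
    (intervalIntegrable_iff_integrableOn_Ioc_of_le zero_le_one).mpr (hf.integrable one_le_two)
  have hL2 : MemLp (fun t => (f t : ℂ)) 2 (volume.restrict (Ioc 0 1)) := hf.ofReal
  convert hasSum_sq_fourierCoeffOn zero_lt_one hL2 using 1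
  · funext n
    rw [fourierCoeffOn_ofReal hfi, Complex.sq_norm, sub_eq_add_neg, ← neg_mul,
      ← Complex.ofReal_neg, Complex.normSq_add_mul_I, neg_sq]
  · simp

theorem eigenvalue_mul_integral_sq_eq {K : ℝ → ℝ} {μ : ℝ} (hK : Continuous K)
    (hf : IntervalIntegrable f volume 0 1)
    (hf2 : IntervalIntegrable (fun t => f t ^ 2) volume 0 1)
    (heig : ∀ s ∈ Icc (0:ℝ) 1, ∫ t in (0:ℝ)..1, (K (t - s) - K s * K t) * f t = μ * f s) :
    μ * ∫ t in (0:ℝ)..1, f t ^ 2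
      = (∫ s in (0:ℝ)..1, (∫ t in (0:ℝ)..1, K (t - s) * f t) * f s)
        - (∫ t in (0:ℝ)..1, K t * f t) ^ 2 := by
  set J := ∫ t in (0:ℝ)..1, K t * f t
  have hKf : IntervalIntegrable (fun t => K t * f t) volume 0 1 :=
    hf.continuousOn_mul hK.continuousOn
  -- Rewriting the inner integral by the eigenvalue equation on `[0, 1]` avoids having to show
  -- that `s ↦ ∫ t, K (t - s) * f t` is integrable.
  have hinner : ∀ s ∈ uIcc (0:ℝ) 1, (∫ t in (0:ℝ)..1, K (t - s) * f t) * f s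
      = μ * f s ^ 2 + J * (K s * f s) := by
    intro s hs
    have hsplit : ∫ t in (0:ℝ)..1, (K (t - s) - K s * K t) * f t
        = (∫ t in (0:ℝ)..1, K (t - s) * f t) - K s * J := by
      simp_rw [sub_mul, mul_assoc]
      rw [integral_sub (hf.continuousOn_mul (by fun_prop)) (hKf.const_mul _),
        intervalIntegral.integral_const_mul]
    rw [uIcc_of_le zero_le_one] at hs
    have := heig s hs
    rw [hsplit] at this
    linear_combination (f s) * this
  rw [integral_congr hinner, integral_add (hf2.const_mul μ) (hKf.const_mul J),
    intervalIntegral.integral_const_mul, intervalIntegral.integral_const_mul]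
  ring

variable {ι : Type*} [Countable ι]

theorem hasSum_intervalIntegral_tsum_mul {g : ι → ℝ → ℝ} {B : ι → ℝ} {a b : ℝ}
    (hg : ∀ i, Continuous (g i)) (hgB : ∀ i t, |g i t| ≤ B i) (hB : Summable B)
    (hf : IntervalIntegrable f volume a b) :
    HasSum (fun i => ∫ t in a..b, g i t * f t) (∫ t in a..b, (∑' i, g i t) * f t) := by
  refine hasSum_integral_of_dominated_convergence (fun i t => B i * |f t|)
    (fun i => (hg i).aestronglyMeasurable.mul hf.def'.aestronglyMeasurable)
    (fun i => ae_of_all _ fun t _ => ?_) (ae_of_all _ fun t _ => hB.mul_right _) ?_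
    (ae_of_all _ fun t _ => ?_)
  · rw [norm_mul, Real.norm_eq_abs, Real.norm_eq_abs]
    exact mul_le_mul_of_nonneg_right (hgB i t) (abs_nonneg _)
  · simp_rw [tsum_mul_right]
    exact hf.abs.const_mul _
  · exact (hB.of_norm_bounded (hgB · t)).hasSum.mul_right (f t)

theorem hasSum_integral_integral_mul_of_hasSum_cos {b ω : ι → ℝ} {K : ℝ → ℝ} (hb : Summable b)
    (hK : ∀ δ, HasSum (fun i => b i * cos (2 * π * ω i * δ)) (K δ))
    (hf : IntervalIntegrable f volume 0 1) :
    HasSum (fun i => b i * (cosCoeff f (ω i) ^ 2 + sinCoeff f (ω i) ^ 2))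
      (∫ s in (0:ℝ)..1, (∫ t in (0:ℝ)..1, K (t - s) * f t) * f s) := by
  have hinner (s : ℝ) : ∫ t in (0:ℝ)..1, K (t - s) * f t = ∑' i, b i *
      (cos (2 * π * ω i * s) * cosCoeff f (ω i) + sin (2 * π * ω i * s) * sinCoeff f (ω i)) := by
    have h : HasSum (fun i => ∫ t in (0:ℝ)..1, b i * cos (2 * π * ω i * (t - s)) * f t)
        (∫ t in (0:ℝ)..1, (∑' i, b i * cos (2 * π * ω i * (t - s))) * f t) :=
      hasSum_intervalIntegral_tsum_mul (fun i => by fun_prop) (fun i t => abs_mul_cos_le _ _)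
        hb.abs hf
    calc ∫ t in (0:ℝ)..1, K (t - s) * f t
        = ∫ t in (0:ℝ)..1, (∑' i, b i * cos (2 * π * ω i * (t - s))) * f t := by
          simp only [(hK _).tsum_eq]
      _ = _ := h.tsum_eq.symm
      _ = _ := tsum_congr fun i => by
          rw [← integral_cos_sub_mul hf, ← intervalIntegral.integral_const_mul]
          congr 1 with t
          ring
  have hcoeff (ω : ℝ) : |cosCoeff f ω| + |sinCoeff f ω| ≤ 2 * ∫ t in (0:ℝ)..1, |f t| := by
    have hc := abs_integral_mul_le_integral_abs (fun t => abs_cos_le_one (2 * π * ω * t)) hf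
    have hs := abs_integral_mul_le_integral_abs (fun t => abs_sin_le_one (2 * π * ω * t)) hf
    rw [cosCoeff, sinCoeff]
    linarith
  have h : HasSum (fun i => ∫ s in (0:ℝ)..1, b i *
        (cos (2 * π * ω i * s) * cosCoeff f (ω i) + sin (2 * π * ω i * s) * sinCoeff f (ω i)) * f s)
      (∫ s in (0:ℝ)..1, (∑' i, b i * (cos (2 * π * ω i * s) * cosCoeff f (ω i)
        + sin (2 * π * ω i * s) * sinCoeff f (ω i))) * f s) :=
    hasSum_intervalIntegral_tsum_mul (fun i => by fun_prop) (fun i s => ?_)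
      (hb.abs.mul_right (2 * ∫ t in (0:ℝ)..1, |f t|)) hf
  · simp only [← hinner] at h
    refine h.congr_fun fun i => ?_
    rw [sq, sq, ← integral_cos_add_sin_mul hf, ← intervalIntegral.integral_const_mul]
    congr 1 with s
    ring
  · rw [abs_mul]
    exact mul_le_mul_of_nonneg_left ((abs_cos_mul_add_sin_mul_le _ _ _).trans (hcoeff _))
      (abs_nonneg _)

end

theorem conditioned_eigenvalues_bounded_by_max_general
    (a : ℕ → ℝ) (hsum : Summable a)
    (C : ℝ → ℝ)
    (hC : ∀ δ : ℝ, C δ = a 0 + 2 * ∑' n : ℕ, a (n + 1) * Real.cos (2 * (n + 1) * Real.pi * δ))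
    (R : ℝ → ℝ → ℝ)
    (hR : ∀ s t : ℝ, R s t = C (t - s) - C s * C t)
    (atilde : ℝ)
    (f : ℝ → ℝ) (hf : ContinuousOn f (Set.Icc 0 1))
    (hf0 : ∃ t ∈ Set.Icc (0:ℝ) 1, f t ≠ 0)
    (heig : ∀ s ∈ Set.Icc (0:ℝ) 1, ∫ t in (0:ℝ)..1, R s t * f t = atilde * f s) :
    atilde ≤ ⨆ n : ℕ, a n := by
  have hfi : IntervalIntegrable f volume 0 1 := hf.intervalIntegrable_of_Icc zero_le_one
  have hb : Summable fun n : ℤ => a n.natAbs :=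
    summable_int_iff_summable_nat_and_neg.mpr ⟨by simpa using hsum, by simpa using hsum⟩
  have hker (δ : ℝ) : HasSum (fun n : ℤ => a n.natAbs * cos (2 * π * n * δ)) (C δ) :=
    hC δ ▸ hasSum_int_natAbs_mul_cos hsum δ
  have hbdd : BddAbove (range a) := hsum.tendsto_cofinite_zero.bddAbove_range_of_cofinite
  have hform_le : (∫ s in (0:ℝ)..1, (∫ t in (0:ℝ)..1, C (t - s) * f t) * f s)
      ≤ (⨆ n : ℕ, a n) * ∫ t in (0:ℝ)..1, f t ^ 2 :=
    hasSum_le (fun n => mul_le_mul_of_nonneg_right (le_ciSup hbdd _) (by positivity))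
      (hasSum_integral_integral_mul_of_hasSum_cos hb hker hfi)
      ((hasSum_sq_cosCoeff_add_sq_sinCoeff hf.memLp_restrict_Ioc).mul_left _)
  have hrayleigh := eigenvalue_mul_integral_sq_eq (continuous_of_hasSum_cos hb hker) hfi
    ((hf.pow 2).intervalIntegrable_of_Icc zero_le_one)
    fun s hs => by simpa only [hR] using heig s hs
  obtain ⟨t₀, ht₀, hft₀⟩ := hf0
  have hnorm_pos : 0 < ∫ t in (0:ℝ)..1, f t ^ 2 :=
    integral_pos zero_lt_one (hf.pow 2) (fun t _ => sq_nonneg _) ⟨t₀, ht₀, by positivity⟩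
  refine le_of_mul_le_mul_right ?_ hnorm_pos
  linarith [sq_nonneg (∫ t in (0:ℝ)..1, C t * f t)]

/-- No eigenvalue of the conditioned covariance operator with kernel
`R(s,t) = C̃(t-s) - C̃(s)C̃(t)` (where `C̃(0) = 1`) exceeds `max aₙ`. -/
theorem conditioned_eigenvalues_bounded_by_max
    (a : ℕ → ℝ) (ha : ∀ n, 0 ≤ a n) (hsum : Summable a)
    (hnorm : a 0 + 2 * ∑' n : ℕ, a (n + 1) = 1)
    (C : ℝ → ℝ)
    (hC : ∀ δ : ℝ, C δ = a 0 + 2 * ∑' n : ℕ, a (n + 1) * Real.cos (2 * (n + 1) * Real.pi * δ))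
    (R : ℝ → ℝ → ℝ)
    (hR : ∀ s t : ℝ, R s t = C (t - s) - C s * C t)
    (atilde : ℝ) (hatilde : 0 < atilde)
    (f : ℝ → ℝ) (hf : ContinuousOn f (Set.Icc 0 1))
    (hf0 : ∃ t ∈ Set.Icc (0:ℝ) 1, f t ≠ 0)
    (heig : ∀ s ∈ Set.Icc (0:ℝ) 1, ∫ t in (0:ℝ)..1, R s t * f t = atilde * f s) :
    atilde ≤ ⨆ n : ℕ, a n :=
  conditioned_eigenvalues_bounded_by_max_general a hsum C hC R hR atilde f hf hf0 heig
end
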